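/- arXiv:2404.10850 — 4 statements merged into one kernel-verified Lean document; each statement's English description precedes it below -/
import Mathlib

section
/- For the input/output model y_{k+n} = -Σ_{i=1}^n F_i y_{k+n-i} + Σ_{i=0}^n G_i u_{k+n-i}, define recursively 𝓕_{n,0} = [F_1 ⋯ F_n], 𝓖_{n,0} = [G_0 ⋯ G_n], and for j ≥ 1, 𝓕_{n,j} = S(𝓕_{n,0}, j) - Σ_{i=1}^{min{j,n}} F_i 𝓕_{n,j-i} and 𝓖_{n,j} = [𝓖_{n,0}, 0_{p×jm}] - Σ_{i=1}^{min{j,n}} F_i [0_{p×im}, 𝓖_{n,j-i}], where S(𝓕_{n,0}, j) is the j-step left block shift [F_{j+1} ⋯ F_n 0_{p×jp}] if j ≤ n-1 and 0 if j ≥ n. Then for all k ≥ k_0 and j ≥ 0, y_{k+n+j} = -𝓕_{n,j} 𝓨_{k,n} + 𝓖_{n,j} 𝓤_{k,n+j}, where 𝓨_{k,n} = (y_{k+n-1}; …; y_k) and 𝓤_{k,n+j} = (u_{k+n+j}; …; u_k). -/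
open Finset Matrix

noncomputable def calF {p : ℕ} (F : ℕ → Matrix (Fin p) (Fin p) ℝ) (n : ℕ) :
    ℕ → ℕ → Matrix (Fin p) (Fin p) ℝ
  | 0 => fun i => F i
  | (j+1) => fun i =>
      (if j + 1 + i ≤ n then F (j + 1 + i) else 0)
        - ∑ t ∈ Finset.range (min (j+1) n), F (t+1) * calF F n (j - t) i
  decreasing_by omega

noncomputable def calG {p m : ℕ} (F : ℕ → Matrix (Fin p) (Fin p) ℝ)
    (G : ℕ → Matrix (Fin p) (Fin m) ℝ) (n : ℕ) :
    ℕ → ℕ → Matrix (Fin p) (Fin m) ℝ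
  | 0 => fun i => G i
  | (j+1) => fun i =>
      (if i ≤ n then G i else 0)
        - ∑ t ∈ Finset.range (min (j+1) n),
            F (t+1) * (if t + 1 ≤ i then calG F G n (j - t) (i - (t+1)) else 0)
  decreasing_by omega

/-- The order-`n` input/output recurrence holding from time `k0`. -/
def IORec {p m : ℕ} (n : ℕ) (F : ℕ → Matrix (Fin p) (Fin p) ℝ)
    (G : ℕ → Matrix (Fin p) (Fin m) ℝ) (u : ℕ → Fin m → ℝ) (y : ℕ → Fin p → ℝ)
    (k0 : ℕ) : Prop :=
  ∀ k, k0 ≤ k →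
    y (k + n) = -(∑ i ∈ Finset.Icc 1 n, F i *ᵥ y (k + n - i))
      + ∑ i ∈ Finset.range (n+1), G i *ᵥ u (k + n - i)

/-- Equivalence of an order-`n` model and an order-`nh` model (`n ≤ nh`). -/
def IOEquiv {p m : ℕ} (n : ℕ) (F : ℕ → Matrix (Fin p) (Fin p) ℝ)
    (G : ℕ → Matrix (Fin p) (Fin m) ℝ) (nh : ℕ)
    (Fh : ℕ → Matrix (Fin p) (Fin p) ℝ) (Gh : ℕ → Matrix (Fin p) (Fin m) ℝ) : Prop :=
  ∀ k0 : ℕ, ∀ u : ℕ → Fin m → ℝ, ∀ y yh : ℕ → Fin p → ℝ,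
    IORec n F G u y k0 →
    (∀ k, k0 ≤ k → k < k0 + nh → yh k = y k) →
    IORec nh Fh Gh u yh k0 →
    ∀ k, k0 + nh ≤ k → yh k = y k


private lemma my_sum_mulVec {p q : ℕ} {ι : Type*} (s : Finset ι)
    (A : ι → Matrix (Fin p) (Fin q) ℝ) (v : Fin q → ℝ) :
    (∑ i ∈ s, A i) *ᵥ v = ∑ i ∈ s, A i *ᵥ v := by
  induction s using Finset.cons_induction <;> simp [Matrix.add_mulVec, *]

private lemma my_mulVec_sum {p q : ℕ} {ι : Type*} (s : Finset ι)
    (A : Matrix (Fin p) (Fin q) ℝ) (v : ι → Fin q → ℝ) :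
    A *ᵥ (∑ i ∈ s, v i) = ∑ i ∈ s, A *ᵥ v i := by
  induction s using Finset.cons_induction <;> simp [Matrix.mulVec_add, *]

private lemma my_ite_mulVec {p q : ℕ} (c : Prop) [Decidable c]
    (A : Matrix (Fin p) (Fin q) ℝ) (v : Fin q → ℝ) :
    (if c then A else 0) *ᵥ v = if c then A *ᵥ v else 0 := by
  split <;> simp

/-- Proposition 1, output transition equation:
for all k ≥ k0 and j ≥ 0, y_{k+n+j} = -𝓕_{n,j} 𝓨_{k,n} + 𝓖_{n,j} 𝓤_{k,n+j},
stated blockwise. -/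
theorem output_transition_equation {p m : ℕ} (n k0 : ℕ)
    (F : ℕ → Matrix (Fin p) (Fin p) ℝ) (G : ℕ → Matrix (Fin p) (Fin m) ℝ)
    (u : ℕ → Fin m → ℝ) (y : ℕ → Fin p → ℝ)
    (hy : IORec n F G u y k0) :
    ∀ k, k0 ≤ k → ∀ j : ℕ,
      y (k + n + j) = -(∑ i ∈ Finset.Icc 1 n, calF F n j i *ᵥ y (k + n - i))
        + ∑ i ∈ Finset.range (n + j + 1), calG F G n j i *ᵥ u (k + n + j - i) := by
  intro k hk j
  induction j using Nat.strong_induction_on with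
  | _ j IH =>
  cases j with
  | zero => simpa [calF, calG] using hy k hk
  | succ j =>
    have hMn : min (j+1) n ≤ n := min_le_right _ _
    have hrec := hy (k + (j+1)) (le_trans hk (by omega))
    have e1 : k + (j+1) + n = k + n + (j+1) := by omega
    rw [e1] at hrec
    -- the four structural claims
    have hA : ∑ i ∈ Finset.Icc 1 n,
          (if j + 1 + i ≤ n then F (j + 1 + i) else 0) *ᵥ y (k + n - i)
        = ∑ t ∈ Finset.Ico (min (j+1) n) n, F (t+1) *ᵥ y (k + n + (j+1) - (t+1)) := by
      calc ∑ i ∈ Finset.Icc 1 n,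
            (if j + 1 + i ≤ n then F (j + 1 + i) else 0) *ᵥ y (k + n - i)
          = ∑ i ∈ Finset.Icc 1 n,
              (if j + 1 + i ≤ n then F (j + 1 + i) *ᵥ y (k + n - i) else 0) := by
            exact Finset.sum_congr rfl fun i _ => my_ite_mulVec _ _ _
        _ = ∑ i ∈ (Finset.Icc 1 n).filter (fun i => j + 1 + i ≤ n),
              F (j + 1 + i) *ᵥ y (k + n - i) := (Finset.sum_filter _ _).symm
        _ = ∑ t ∈ Finset.Ico (min (j+1) n) n, F (t+1) *ᵥ y (k + n + (j+1) - (t+1)) := by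
            refine Finset.sum_nbij' (fun i => i + j) (fun t => t - j) ?_ ?_ ?_ ?_ ?_
            · intro a ha
              simp only [Finset.mem_filter, Finset.mem_Icc] at ha
              simp only [Finset.mem_Ico]
              omega
            · intro a ha
              simp only [Finset.mem_Ico] at ha
              simp only [Finset.mem_filter, Finset.mem_Icc]
              omega
            · intro a ha
              simp only [Finset.mem_filter, Finset.mem_Icc] at ha
              show a + j - j = a
              omega
            · intro a ha
              simp only [Finset.mem_Ico] at ha
              show a - j + j = a
              omega
            · intro a ha
              simp only [Finset.mem_filter, Finset.mem_Icc] at ha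
              have e2 : j + 1 + a = a + j + 1 := by omega
              have e3 : k + n - a = k + n + (j+1) - (a + j + 1) := by omega
              rw [e2, e3]
    have hC : ∑ i ∈ Finset.range (n + (j+1) + 1),
          (if i ≤ n then G i else 0) *ᵥ u (k + n + (j+1) - i)
        = ∑ i ∈ Finset.range (n+1), G i *ᵥ u (k + n + (j+1) - i) := by
      calc ∑ i ∈ Finset.range (n + (j+1) + 1),
            (if i ≤ n then G i else 0) *ᵥ u (k + n + (j+1) - i)
          = ∑ i ∈ Finset.range (n + (j+1) + 1),
              (if i ≤ n then G i *ᵥ u (k + n + (j+1) - i) else 0) := by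
            exact Finset.sum_congr rfl fun i _ => my_ite_mulVec _ _ _
        _ = ∑ i ∈ (Finset.range (n + (j+1) + 1)).filter (fun i => i ≤ n),
              G i *ᵥ u (k + n + (j+1) - i) := (Finset.sum_filter _ _).symm
        _ = ∑ i ∈ Finset.range (n+1), G i *ᵥ u (k + n + (j+1) - i) := by
            refine Finset.sum_congr ?_ fun _ _ => rfl
            ext a
            simp only [Finset.mem_filter, Finset.mem_range]
            omega
    have hB : ∑ i ∈ Finset.Icc 1 n,
          (∑ t ∈ Finset.range (min (j+1) n), F (t+1) * calF F n (j - t) i) *ᵥ y (k + n - i)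
        = ∑ t ∈ Finset.range (min (j+1) n),
            F (t+1) *ᵥ (∑ i ∈ Finset.Icc 1 n, calF F n (j - t) i *ᵥ y (k + n - i)) := by
      simp only [my_sum_mulVec, my_mulVec_sum, Matrix.mulVec_mulVec]
      exact Finset.sum_comm
    have hD : ∑ i ∈ Finset.range (n + (j+1) + 1),
          (∑ t ∈ Finset.range (min (j+1) n),
            F (t+1) * (if t + 1 ≤ i then calG F G n (j - t) (i - (t+1)) else 0)) *ᵥ
              u (k + n + (j+1) - i)
        = ∑ t ∈ Finset.range (min (j+1) n),
            F (t+1) *ᵥ (∑ i ∈ Finset.range (n + (j - t) + 1),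
              calG F G n (j - t) i *ᵥ u (k + n + (j - t) - i)) := by
      simp only [my_sum_mulVec]
      rw [Finset.sum_comm]
      refine Finset.sum_congr rfl fun t ht => ?_
      simp only [Finset.mem_range] at ht
      have htj : t ≤ j := by omega
      calc ∑ i ∈ Finset.range (n + (j+1) + 1),
            (F (t+1) * (if t + 1 ≤ i then calG F G n (j - t) (i - (t+1)) else 0)) *ᵥ
              u (k + n + (j+1) - i)
          = ∑ i ∈ Finset.range (n + (j+1) + 1),
              (if t + 1 ≤ i then
                (F (t+1) * calG F G n (j - t) (i - (t+1))) *ᵥ u (k + n + (j+1) - i)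
              else 0) := by
            refine Finset.sum_congr rfl fun i _ => ?_
            split_ifs <;> simp
        _ = ∑ i ∈ (Finset.range (n + (j+1) + 1)).filter (fun i => t + 1 ≤ i),
              (F (t+1) * calG F G n (j - t) (i - (t+1))) *ᵥ u (k + n + (j+1) - i) :=
            (Finset.sum_filter _ _).symm
        _ = ∑ i ∈ Finset.Ico (t+1) (n + (j+1) + 1),
              (F (t+1) * calG F G n (j - t) (i - (t+1))) *ᵥ u (k + n + (j+1) - i) := by
            refine Finset.sum_congr ?_ fun _ _ => rfl
            ext a
            simp only [Finset.mem_filter, Finset.mem_range, Finset.mem_Ico]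
            omega
        _ = ∑ i ∈ Finset.range (n + (j+1) + 1 - (t+1)),
              (F (t+1) * calG F G n (j - t) (t + 1 + i - (t+1))) *ᵥ
                u (k + n + (j+1) - (t + 1 + i)) := Finset.sum_Ico_eq_sum_range _ _ _
        _ = ∑ i ∈ Finset.range (n + (j - t) + 1),
              (F (t+1) * calG F G n (j - t) i) *ᵥ u (k + n + (j - t) - i) := by
            have ecard : n + (j+1) + 1 - (t+1) = n + (j - t) + 1 := by omega
            rw [ecard]
            refine Finset.sum_congr rfl fun i _ => ?_
            have e4 : t + 1 + i - (t+1) = i := by omega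
            have e5 : k + n + (j+1) - (t + 1 + i) = k + n + (j - t) - i := by omega
            rw [e4, e5]
        _ = F (t+1) *ᵥ (∑ i ∈ Finset.range (n + (j - t) + 1),
              calG F G n (j - t) i *ᵥ u (k + n + (j - t) - i)) := by
            simp only [my_mulVec_sum, Matrix.mulVec_mulVec]
    -- splitting the recurrence's F-sum
    have hP : ∑ i ∈ Finset.Icc 1 n, F i *ᵥ y (k + n + (j+1) - i)
        = (∑ t ∈ Finset.range (min (j+1) n), F (t+1) *ᵥ
            (-(∑ i ∈ Finset.Icc 1 n, calF F n (j - t) i *ᵥ y (k + n - i))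
              + ∑ i ∈ Finset.range (n + (j - t) + 1),
                  calG F G n (j - t) i *ᵥ u (k + n + (j - t) - i)))
          + ∑ t ∈ Finset.Ico (min (j+1) n) n, F (t+1) *ᵥ y (k + n + (j+1) - (t+1)) := by
      calc ∑ i ∈ Finset.Icc 1 n, F i *ᵥ y (k + n + (j+1) - i)
          = ∑ t ∈ Finset.range n, F (t+1) *ᵥ y (k + n + (j+1) - (t+1)) := by
            rw [← Finset.Ico_add_one_right_eq_Icc, Finset.sum_Ico_eq_sum_range]
            rw [show n + 1 - 1 = n from rfl]
            exact Finset.sum_congr rfl fun t _ => by rw [Nat.add_comm 1 t]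
        _ = (∑ t ∈ Finset.Ico 0 (min (j+1) n), F (t+1) *ᵥ y (k + n + (j+1) - (t+1)))
            + ∑ t ∈ Finset.Ico (min (j+1) n) n, F (t+1) *ᵥ y (k + n + (j+1) - (t+1)) := by
            rw [Finset.sum_Ico_consecutive _ (Nat.zero_le _) hMn, Finset.range_eq_Ico]
        _ = (∑ t ∈ Finset.range (min (j+1) n), F (t+1) *ᵥ
              (-(∑ i ∈ Finset.Icc 1 n, calF F n (j - t) i *ᵥ y (k + n - i))
                + ∑ i ∈ Finset.range (n + (j - t) + 1),
                    calG F G n (j - t) i *ᵥ u (k + n + (j - t) - i)))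
            + ∑ t ∈ Finset.Ico (min (j+1) n) n, F (t+1) *ᵥ y (k + n + (j+1) - (t+1)) := by
            rw [← Finset.range_eq_Ico]
            congr 1
            refine Finset.sum_congr rfl fun t ht => ?_
            simp only [Finset.mem_range] at ht
            have e6 : k + n + (j+1) - (t+1) = k + n + (j - t) := by omega
            rw [e6, IH (j - t) (by omega)]
    rw [hrec, hP]
    rw [calF, calG]
    simp only [Matrix.sub_mulVec, Finset.sum_sub_distrib, hA, hB, hC, hD,
      Matrix.mulVec_add, Matrix.mulVec_neg, Finset.sum_add_distrib, Finset.sum_neg_distrib]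
    abel
end

section
/- Let the higher-order model ŷ_{k+n̂} = -Σ_{i=1}^{n̂} F̂_i ŷ_{k+n̂-i} + Σ_{i=0}^{n̂} Ĝ_i u_{k+n̂-i} with n̂ > n be driven by outputs of the order-n model (i.e., ŷ_k = y_k for k_0 ≤ k ≤ k*+n̂-1 where y is generated by the order-n model). Then ŷ_{k*+n̂} = -𝓕̂_{n,n̂-n} 𝓨_{k*,n} + 𝓖̂_{n,n̂-n} 𝓤_{k*,n̂}, where 𝓕̂_{n,n̂-n} = [F̂_{n̂-n+1} ⋯ F̂_{n̂}] - Σ_{i=1}^{n̂-n} F̂_i 𝓕_{n,n̂-n-i} and 𝓖̂_{n,n̂-n} = 𝓖̂_{n̂} - Σ_{i=1}^{n̂-n} F̂_i [0_{p×im}, 𝓖_{n,n̂-n-i}]. -/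
open Finset Matrix

/-- 𝓕̂_{n,n̂-n}, block i (for 1 ≤ i ≤ n). -/
noncomputable def calFhat {p : ℕ} (F Fh : ℕ → Matrix (Fin p) (Fin p) ℝ) (n nh : ℕ)
    (i : ℕ) : Matrix (Fin p) (Fin p) ℝ :=
  Fh (nh - n + i) - ∑ t ∈ Finset.range (nh - n), Fh (t+1) * calF F n (nh - n - (t+1)) i

/-- 𝓖̂_{n,n̂-n}, block i (for 0 ≤ i ≤ n̂). -/
noncomputable def calGhat {p m : ℕ} (F Fh : ℕ → Matrix (Fin p) (Fin p) ℝ)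
    (G Gh : ℕ → Matrix (Fin p) (Fin m) ℝ) (n nh : ℕ) (i : ℕ) :
    Matrix (Fin p) (Fin m) ℝ :=
  Gh i - ∑ t ∈ Finset.range (nh - n),
    Fh (t+1) * (if t + 1 ≤ i then calG F G n (nh - n - (t+1)) (i - (t+1)) else 0)

section Auxiliary

lemma sum_Ioc_zero_eq {β : Type*} [AddCommMonoid β] (f : ℕ → β) (S : ℕ) :
    ∑ i ∈ Finset.Ioc 0 S, f i = ∑ t ∈ Finset.range S, f (t + 1) := by
  rw [← Finset.Ico_add_one_add_one_eq_Ioc, Finset.sum_Ico_eq_sum_range]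
  rw [show S + 1 - (0 + 1) = S by omega]
  exact Finset.sum_congr rfl fun i _ => by rw [Nat.add_comm]; rfl

lemma iteF_sum {p : ℕ} (F : ℕ → Matrix (Fin p) (Fin p) ℝ) (v : ℕ → Fin p → ℝ)
    (s n : ℕ) :
    ∑ i ∈ Finset.Icc 1 n, (if s + i ≤ n then F (s + i) else 0) *ᵥ v i
      = ∑ i ∈ Finset.Ioc s n, F i *ᵥ v (i - s) := by
  have h1 : ∑ i ∈ Finset.Icc 1 n, (if s + i ≤ n then F (s + i) else 0) *ᵥ v i
      = ∑ i ∈ Finset.Icc 1 (n - s), (if s + i ≤ n then F (s + i) else 0) *ᵥ v i := by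
    refine (Finset.sum_subset (Finset.Icc_subset_Icc_right (Nat.sub_le n s)) ?_).symm
    intro x hx hnx
    simp only [Finset.mem_Icc] at hx hnx
    rw [if_neg (by omega), Matrix.zero_mulVec]
  rw [h1]
  have h2 : ∑ i ∈ Finset.Icc 1 (n - s), (if s + i ≤ n then F (s + i) else 0) *ᵥ v i
      = ∑ i ∈ Finset.Icc 1 (n - s), F (s + i) *ᵥ v i := by
    refine Finset.sum_congr rfl fun i hi => ?_
    simp only [Finset.mem_Icc] at hi
    rw [if_pos (by omega)]
  rw [h2, ← Finset.Ico_add_one_right_eq_Icc, Finset.sum_Ico_eq_sum_range,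
    ← Finset.Ico_add_one_add_one_eq_Ioc, Finset.sum_Ico_eq_sum_range]
  rw [show n - s + 1 - 1 = n - s by omega, show n + 1 - (s + 1) = n - s by omega]
  refine Finset.sum_congr rfl fun i hi => ?_
  have e1 : s + (1 + i) = Nat.succ s + i := by omega
  have e2 : (1 : ℕ) + i = Nat.succ s + i - s := by omega
  rw [e1, e2]; rfl

lemma shift_sum {p m : ℕ} (A : Matrix (Fin p) (Fin p) ℝ)
    (C : ℕ → Matrix (Fin p) (Fin m) ℝ) (u : ℕ → Fin m → ℝ) (s N base : ℕ)
    (hs : s ≤ N) :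
    ∑ i ∈ Finset.range (N + 1),
        (A * (if s ≤ i then C (i - s) else 0)) *ᵥ u (base - i)
      = ∑ i ∈ Finset.range (N - s + 1), (A * C i) *ᵥ u (base - s - i) := by
  have h1 : ∑ i ∈ Finset.range (N + 1),
        (A * (if s ≤ i then C (i - s) else 0)) *ᵥ u (base - i)
      = ∑ i ∈ Finset.Ico s (N + 1),
        (A * (if s ≤ i then C (i - s) else 0)) *ᵥ u (base - i) := by
    refine (Finset.sum_subset ?_ ?_).symm
    · intro x hx; simp only [Finset.mem_Ico] at hx; simp only [Finset.mem_range]; omega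
    · intro x hx hnx
      simp only [Finset.mem_range] at hx
      simp only [Finset.mem_Ico] at hnx
      rw [if_neg (by omega), Matrix.mul_zero, Matrix.zero_mulVec]
  rw [h1, Finset.sum_Ico_eq_sum_range]
  rw [show N + 1 - s = N - s + 1 by omega]
  refine Finset.sum_congr rfl fun i hi => ?_
  rw [if_pos (by omega)]
  have e1 : s + i - s = i := by omega
  have e2 : base - (s + i) = base - s - i := by omega
  rw [e1, e2]

lemma mulVec_sum' {p q : ℕ} {ι : Type*} (s : Finset ι) (A : Matrix (Fin p) (Fin q) ℝ)
    (f : ι → Fin q → ℝ) : A *ᵥ (∑ i ∈ s, f i) = ∑ i ∈ s, A *ᵥ f i :=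
  map_sum (Matrix.mulVecLin A) f s

lemma sum_mulVec' {p q : ℕ} {ι : Type*} (s : Finset ι) (f : ι → Matrix (Fin p) (Fin q) ℝ)
    (v : Fin q → ℝ) : (∑ i ∈ s, f i) *ᵥ v = ∑ i ∈ s, f i *ᵥ v :=
  map_sum (AddMonoidHom.mk' (fun M : Matrix (Fin p) (Fin q) ℝ => M *ᵥ v)
    (fun A B => Matrix.add_mulVec A B v)) f s

lemma IccIoc (n : ℕ) : Finset.Icc 1 n = Finset.Ioc 0 n := by
  ext x; simp; omega

lemma transition {p m : ℕ} {n : ℕ} {F : ℕ → Matrix (Fin p) (Fin p) ℝ}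
    {G : ℕ → Matrix (Fin p) (Fin m) ℝ} {u : ℕ → Fin m → ℝ} {y : ℕ → Fin p → ℝ}
    {k0 : ℕ} (hy : IORec n F G u y k0) :
    ∀ j k, k0 ≤ k →
      y (k + n + j) = -(∑ i ∈ Finset.Icc 1 n, calF F n j i *ᵥ y (k + n - i))
        + ∑ i ∈ Finset.range (n + j + 1), calG F G n j i *ᵥ u (k + n + j - i) := by
  intro j
  induction j using Nat.strong_induction_on with
  | _ j IH =>
    match j with
    | 0 =>
      intro k hk
      simpa [calF, calG] using hy k hk
    | (j+1) =>
      intro k hk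
      have e : k + (j+1) + n = k + n + (j+1) := by ring
      have hrec := hy (k + (j+1)) (le_trans hk (Nat.le_add_right _ _))
      rw [e] at hrec
      have hsplit : ∑ i ∈ Finset.Icc 1 n, F i *ᵥ y (k + n + (j+1) - i)
          = (∑ t ∈ Finset.range (min (j+1) n), F (t+1) *ᵥ y (k + n + (j - t)))
            + ∑ i ∈ Finset.Icc 1 n,
                (if (j+1) + i ≤ n then F ((j+1) + i) else 0) *ᵥ y (k + n - i) := by
        conv_lhs => rw [IccIoc,
          ← Finset.sum_Ioc_consecutive _ (Nat.zero_le (min (j+1) n)) (min_le_right (j+1) n)]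
        congr 1
        · rw [sum_Ioc_zero_eq]
          refine Finset.sum_congr rfl fun t ht => ?_
          simp only [Finset.mem_range] at ht
          have e2 : k + n + (j+1) - (t+1) = k + n + (j - t) := by omega
          rw [e2]
        · rw [iteF_sum F (fun i => y (k + n - i)) (j+1) n]
          have hIoc : Finset.Ioc (min (j+1) n) n = Finset.Ioc (j+1) n := by
            ext x; simp; omega
          rw [hIoc]
          refine Finset.sum_congr rfl fun i hi => ?_
          simp only [Finset.mem_Ioc] at hi
          have e3 : k + n + (j+1) - i = k + n - (i - (j+1)) := by omega
          rw [e3]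
      have key : ∀ t ∈ Finset.range (min (j+1) n), F (t+1) *ᵥ y (k + n + (j - t))
          = -(∑ i ∈ Finset.Icc 1 n, (F (t+1) * calF F n (j - t) i) *ᵥ y (k + n - i))
            + ∑ i ∈ Finset.range (n + j + 2),
                (F (t+1) * (if t + 1 ≤ i then calG F G n (j - t) (i - (t+1)) else 0))
                  *ᵥ u (k + n + (j+1) - i) := by
        intro t ht
        simp only [Finset.mem_range] at ht
        rw [IH (j - t) (by omega) k hk, Matrix.mulVec_add, Matrix.mulVec_neg]
        congr 1
        · congr 1
          rw [mulVec_sum']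
          exact Finset.sum_congr rfl fun i _ => Matrix.mulVec_mulVec _ _ _
        · rw [show n + j + 2 = (n + j + 1) + 1 by ring,
            shift_sum (F (t+1)) (calG F G n (j - t)) u (t+1) (n+j+1)
              (k + n + (j+1)) (by omega)]
          have h3 : n + j + 1 - (t+1) + 1 = n + (j - t) + 1 := by omega
          have h4 : k + n + (j+1) - (t+1) = k + n + (j - t) := by omega
          rw [h3, h4, mulVec_sum']
          exact Finset.sum_congr rfl fun i _ => Matrix.mulVec_mulVec _ _ _
      have hH : ∑ t ∈ Finset.range (min (j+1) n), F (t+1) *ᵥ y (k + n + (j - t))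
          = -(∑ t ∈ Finset.range (min (j+1) n), ∑ i ∈ Finset.Icc 1 n,
                (F (t+1) * calF F n (j - t) i) *ᵥ y (k + n - i))
            + ∑ t ∈ Finset.range (min (j+1) n), ∑ i ∈ Finset.range (n + j + 2),
                (F (t+1) * (if t + 1 ≤ i then calG F G n (j - t) (i - (t+1)) else 0))
                  *ᵥ u (k + n + (j+1) - i) := by
        rw [Finset.sum_congr rfl key, Finset.sum_add_distrib, Finset.sum_neg_distrib]
      have hFpart : ∑ i ∈ Finset.Icc 1 n, calF F n (j+1) i *ᵥ y (k + n - i)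
          = (∑ i ∈ Finset.Icc 1 n,
                (if (j+1) + i ≤ n then F ((j+1) + i) else 0) *ᵥ y (k + n - i))
            - ∑ t ∈ Finset.range (min (j+1) n), ∑ i ∈ Finset.Icc 1 n,
                (F (t+1) * calF F n (j - t) i) *ᵥ y (k + n - i) := by
        rw [Finset.sum_comm, ← Finset.sum_sub_distrib]
        refine Finset.sum_congr rfl fun i _ => ?_
        rw [calF, Matrix.sub_mulVec, sum_mulVec']
      have hGpart : ∑ i ∈ Finset.range (n + (j+1) + 1), calG F G n (j+1) i *ᵥ u (k + n + (j+1) - i)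
          = (∑ i ∈ Finset.range (n + j + 2),
                (if i ≤ n then G i else 0) *ᵥ u (k + n + (j+1) - i))
            - ∑ t ∈ Finset.range (min (j+1) n), ∑ i ∈ Finset.range (n + j + 2),
                (F (t+1) * (if t + 1 ≤ i then calG F G n (j - t) (i - (t+1)) else 0))
                  *ᵥ u (k + n + (j+1) - i) := by
        rw [show n + (j+1) + 1 = n + j + 2 by ring, Finset.sum_comm, ← Finset.sum_sub_distrib]
        refine Finset.sum_congr rfl fun i _ => ?_
        rw [calG, Matrix.sub_mulVec, sum_mulVec']
      have hB : ∑ i ∈ Finset.range (n+1), G i *ᵥ u (k + n + (j+1) - i)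
          = ∑ i ∈ Finset.range (n + j + 2), (if i ≤ n then G i else 0) *ᵥ u (k + n + (j+1) - i) := by
        have h6 : ∑ i ∈ Finset.range (n+1), G i *ᵥ u (k + n + (j+1) - i)
            = ∑ i ∈ Finset.range (n+1), (if i ≤ n then G i else 0) *ᵥ u (k + n + (j+1) - i) := by
          refine Finset.sum_congr rfl fun i hi => ?_
          simp only [Finset.mem_range] at hi
          rw [if_pos (by omega)]
        rw [h6]
        refine Finset.sum_subset ?_ ?_
        · intro x hx; simp only [Finset.mem_range] at hx ⊢; omega
        · intro x hx hnx
          simp only [Finset.mem_range] at hx hnx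
          rw [if_neg (by omega), Matrix.zero_mulVec]
      show y (k + n + (j+1)) = _
      rw [hrec, hFpart, hGpart, hsplit, hH, ← hB]
      abel

/-- Lemma 1: if the higher-order model is driven by outputs of the
order-n model up to time k*+n̂-1, then ŷ_{k*+n̂} = -𝓕̂_{n,n̂-n} 𝓨_{k*,n} + 𝓖̂_{n,n̂-n} 𝓤_{k*,n̂},
stated blockwise. -/
theorem higher_order_consolidation {p m : ℕ} (n nh k0 kstar : ℕ) (hn : n < nh)
    (hk : k0 ≤ kstar)
    (F Fh : ℕ → Matrix (Fin p) (Fin p) ℝ) (G Gh : ℕ → Matrix (Fin p) (Fin m) ℝ)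
    (u : ℕ → Fin m → ℝ) (y yh : ℕ → Fin p → ℝ)
    (hy : IORec n F G u y k0)
    (hinit : ∀ k, k0 ≤ k → k ≤ kstar + nh - 1 → yh k = y k)
    (hstep : yh (kstar + nh)
      = -(∑ i ∈ Finset.Icc 1 nh, Fh i *ᵥ yh (kstar + nh - i))
        + ∑ i ∈ Finset.range (nh + 1), Gh i *ᵥ u (kstar + nh - i)) :
    yh (kstar + nh)
      = -(∑ i ∈ Finset.Icc 1 n, calFhat F Fh n nh i *ᵥ y (kstar + n - i))
        + ∑ i ∈ Finset.range (nh + 1), calGhat F Fh G Gh n nh i *ᵥ u (kstar + nh - i) := by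
  
  have hyh : ∑ i ∈ Finset.Icc 1 nh, Fh i *ᵥ yh (kstar + nh - i)
      = ∑ i ∈ Finset.Icc 1 nh, Fh i *ᵥ y (kstar + nh - i) := by
    refine Finset.sum_congr rfl fun i hi => ?_
    simp only [Finset.mem_Icc] at hi
    rw [hinit (kstar + nh - i) (by omega) (by omega)]
  rw [hstep, hyh]
  have hsplit : ∑ i ∈ Finset.Icc 1 nh, Fh i *ᵥ y (kstar + nh - i)
      = (∑ t ∈ Finset.range (nh - n), Fh (t+1) *ᵥ y (kstar + n + (nh - n - (t+1))))
        + ∑ i ∈ Finset.Icc 1 n, Fh (nh - n + i) *ᵥ y (kstar + n - i) := by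
    conv_lhs => rw [IccIoc,
      ← Finset.sum_Ioc_consecutive _ (Nat.zero_le (nh - n)) (Nat.sub_le nh n)]
    congr 1
    · rw [sum_Ioc_zero_eq]
      refine Finset.sum_congr rfl fun t ht => ?_
      simp only [Finset.mem_range] at ht
      have e : kstar + nh - (t+1) = kstar + n + (nh - n - (t+1)) := by omega
      rw [e]
    · have t1 : ∑ i ∈ Finset.Icc 1 nh,
            (if (nh - n) + i ≤ nh then Fh ((nh - n) + i) else 0) *ᵥ y (kstar + n - i)
          = ∑ i ∈ Finset.Ioc (nh - n) nh, Fh i *ᵥ y (kstar + nh - i) := by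
        rw [iteF_sum Fh (fun i => y (kstar + n - i)) (nh - n) nh]
        refine Finset.sum_congr rfl fun i hi => ?_
        simp only [Finset.mem_Ioc] at hi
        have e : kstar + n - (i - (nh - n)) = kstar + nh - i := by omega
        rw [e]
      have t2 : ∑ i ∈ Finset.Icc 1 nh,
            (if (nh - n) + i ≤ nh then Fh ((nh - n) + i) else 0) *ᵥ y (kstar + n - i)
          = ∑ i ∈ Finset.Icc 1 n, Fh (nh - n + i) *ᵥ y (kstar + n - i) := by
        rw [← Finset.sum_subset (Finset.Icc_subset_Icc_right (le_of_lt hn)) ?_]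
        · refine Finset.sum_congr rfl fun i hi => ?_
          simp only [Finset.mem_Icc] at hi
          rw [if_pos (by omega)]
        · intro x hx hnx
          simp only [Finset.mem_Icc] at hx hnx
          rw [if_neg (by omega), Matrix.zero_mulVec]
      rw [← t1, t2]
  have key : ∀ t ∈ Finset.range (nh - n), Fh (t+1) *ᵥ y (kstar + n + (nh - n - (t+1)))
      = -(∑ i ∈ Finset.Icc 1 n, (Fh (t+1) * calF F n (nh - n - (t+1)) i) *ᵥ y (kstar + n - i))
        + ∑ i ∈ Finset.range (nh + 1),
            (Fh (t+1) * (if t+1 ≤ i then calG F G n (nh - n - (t+1)) (i - (t+1)) else 0))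
              *ᵥ u (kstar + nh - i) := by
    intro t ht
    simp only [Finset.mem_range] at ht
    rw [transition hy (nh - n - (t+1)) kstar hk, Matrix.mulVec_add, Matrix.mulVec_neg]
    congr 1
    · congr 1
      rw [mulVec_sum']
      exact Finset.sum_congr rfl fun i _ => Matrix.mulVec_mulVec _ _ _
    · rw [shift_sum (Fh (t+1)) (calG F G n (nh - n - (t+1))) u (t+1) nh (kstar + nh)
        (by omega)]
      have h3 : nh - (t+1) + 1 = n + (nh - n - (t+1)) + 1 := by omega
      have h4 : kstar + nh - (t+1) = kstar + n + (nh - n - (t+1)) := by omega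
      rw [h3, h4, mulVec_sum']
      exact Finset.sum_congr rfl fun i _ => Matrix.mulVec_mulVec _ _ _
  have hH : ∑ t ∈ Finset.range (nh - n), Fh (t+1) *ᵥ y (kstar + n + (nh - n - (t+1)))
      = -(∑ t ∈ Finset.range (nh - n), ∑ i ∈ Finset.Icc 1 n,
            (Fh (t+1) * calF F n (nh - n - (t+1)) i) *ᵥ y (kstar + n - i))
        + ∑ t ∈ Finset.range (nh - n), ∑ i ∈ Finset.range (nh + 1),
            (Fh (t+1) * (if t+1 ≤ i then calG F G n (nh - n - (t+1)) (i - (t+1)) else 0))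
              *ᵥ u (kstar + nh - i) := by
    rw [Finset.sum_congr rfl key, Finset.sum_add_distrib, Finset.sum_neg_distrib]
  have hFpart : ∑ i ∈ Finset.Icc 1 n, calFhat F Fh n nh i *ᵥ y (kstar + n - i)
      = (∑ i ∈ Finset.Icc 1 n, Fh (nh - n + i) *ᵥ y (kstar + n - i))
        - ∑ t ∈ Finset.range (nh - n), ∑ i ∈ Finset.Icc 1 n,
            (Fh (t+1) * calF F n (nh - n - (t+1)) i) *ᵥ y (kstar + n - i) := by
    rw [Finset.sum_comm, ← Finset.sum_sub_distrib]
    refine Finset.sum_congr rfl fun i _ => ?_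
    rw [calFhat, Matrix.sub_mulVec, sum_mulVec']
  have hGpart : ∑ i ∈ Finset.range (nh + 1), calGhat F Fh G Gh n nh i *ᵥ u (kstar + nh - i)
      = (∑ i ∈ Finset.range (nh + 1), Gh i *ᵥ u (kstar + nh - i))
        - ∑ t ∈ Finset.range (nh - n), ∑ i ∈ Finset.range (nh + 1),
            (Fh (t+1) * (if t+1 ≤ i then calG F G n (nh - n - (t+1)) (i - (t+1)) else 0))
              *ᵥ u (kstar + nh - i) := by
    rw [Finset.sum_comm, ← Finset.sum_sub_distrib]
    refine Finset.sum_congr rfl fun i _ => ?_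
    rw [calGhat, Matrix.sub_mulVec, sum_mulVec']
  rw [hsplit, hH, hFpart, hGpart]
  abel
end Auxiliary
end

section
/- In the SISO first-order vs. second-order case (m = p = 1, n = 1, n̂ = 2), the second-order model with coefficients (F̂_1, F̂_2, Ĝ_0, Ĝ_1, Ĝ_2) is equivalent to the first-order model with coefficients (F_1, G_0, G_1) if and only if [-F̂_1, -F̂_2, Ĝ_0, Ĝ_1, Ĝ_2] M = [F_1², G_0, G_1 - F_1 G_0, -F_1 G_1], where M is the 5×4 matrix with first row [-F_1, 0, G_0, G_1] and remaining rows the 4×4 identity. In particular, the choice F̂_1 = F_1, Ĝ_0 = G_0, Ĝ_1 = G_1, F̂_2 = Ĝ_2 = 0 satisfies this equation. -/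
open Finset Matrix

/-- Equivalence of the SISO order-1 model (F1, G0, G1) and order-2 model
(F̂1, F̂2, Ĝ0, Ĝ1, Ĝ2): identical outputs for every initial time, every input,
and shared initial conditions. -/
def ScalarEquiv (F1 G0 G1 Fh1 Fh2 Gh0 Gh1 Gh2 : ℝ) : Prop :=
  ∀ k0 : ℕ, ∀ u y yh : ℕ → ℝ,
    (∀ k, k0 ≤ k → y (k + 1) = -F1 * y k + G0 * u (k + 1) + G1 * u k) →
    (∀ k, k0 ≤ k → k < k0 + 2 → yh k = y k) →
    (∀ k, k0 ≤ k → yh (k + 2)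
        = -Fh1 * yh (k + 1) - Fh2 * yh k + Gh0 * u (k + 2) + Gh1 * u (k + 1) + Gh2 * u k) →
    ∀ k, k0 + 2 ≤ k → yh k = y k

/-- Output of the order-1 model from initial value `y0` and input `u`. -/
private noncomputable def oseq (F1 G0 G1 y0 : ℝ) (u : ℕ → ℝ) : ℕ → ℝ
  | 0 => y0
  | (k+1) => -F1 * oseq F1 G0 G1 y0 u k + G0 * u (k+1) + G1 * u k

/-- Generic two-step recursive sequence. -/
private noncomputable def seq2 (a b : ℝ) (f : ℕ → ℝ → ℝ → ℝ) : ℕ → ℝ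
  | 0 => a
  | 1 => b
  | (k+2) => f k (seq2 a b f k) (seq2 a b f (k+1))

private lemma fwd {F1 G0 G1 Fh1 Fh2 Gh0 Gh1 Gh2 : ℝ}
    (h : ScalarEquiv F1 G0 G1 Fh1 Fh2 Gh0 Gh1 Gh2) (y0 u0 u1 u2 : ℝ) :
    -Fh1 * (-F1*y0 + G0*u1 + G1*u0) - Fh2*y0 + Gh0*u2 + Gh1*u1 + Gh2*u0
      = -F1 * (-F1*y0 + G0*u1 + G1*u0) + G0*u2 + G1*u1 := by
  set u : ℕ → ℝ := fun k => if k = 0 then u0 else if k = 1 then u1 else if k = 2 then u2 else 0 with hu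
  set y := oseq F1 G0 G1 y0 u with hy
  set yh := seq2 y0 (y 1)
    (fun k a b => -Fh1*b - Fh2*a + Gh0*u (k+2) + Gh1*u (k+1) + Gh2*u k) with hyh
  have key := h 0 u y yh
    (fun k _ => rfl)
    (by
      intro k _ hk
      interval_cases k
      · rfl
      · rfl)
    (by intro k _; simp [hyh, seq2])
    2 le_rfl
  have h1 : y 1 = -F1*y0 + G0*u1 + G1*u0 := by simp [hy, oseq, hu]
  have h2 : yh 2 = -Fh1*(y 1) - Fh2*y0 + Gh0*u2 + Gh1*u1 + Gh2*u0 := by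
    simp [hyh, seq2, hu]
  have h3 : y 2 = -F1*(y 1) + G0*u2 + G1*u1 := by simp [hy, oseq, hu]
  rw [h2, h3, h1] at key
  linarith [key]

private lemma bwd {F1 G0 G1 Fh1 Fh2 Gh0 Gh1 Gh2 : ℝ}
    (e1 : Fh1 * F1 - Fh2 = F1 ^ 2) (e2 : Gh0 = G0)
    (e3 : Gh1 - Fh1 * G0 = G1 - F1 * G0) (e4 : Gh2 - Fh1 * G1 = -F1 * G1) :
    ScalarEquiv F1 G0 G1 Fh1 Fh2 Gh0 Gh1 Gh2 := by
  intro k0 u y yh hy hinit hrec k hk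
  have main : ∀ n, k0 ≤ n → yh n = y n ∧ yh (n+1) = y (n+1) := by
    intro n hn
    induction n, hn using Nat.le_induction with
    | base =>
        exact ⟨hinit k0 le_rfl (by omega), hinit (k0+1) (by omega) (by omega)⟩
    | succ n hn ih =>
        refine ⟨ih.2, ?_⟩
        have hr := hrec n hn
        rw [ih.1, ih.2] at hr
        rw [hr, hy (n+1) (by omega), hy n hn]
        linear_combination (y n) * e1 + (u (n+2)) * e2 + (u (n+1)) * e3 + (u n) * e4
  exact (main k (by omega)).1

/-- Example 1: in the SISO case m = p = 1, n = 1, n̂ = 2, the models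
are equivalent iff [-F̂1, -F̂2, Ĝ0, Ĝ1, Ĝ2] M = [F1², G0, G1 - F1 G0, -F1 G1]; in
particular the trivial choice F̂1 = F1, Ĝ0 = G0, Ĝ1 = G1, F̂2 = Ĝ2 = 0 satisfies
this equation. -/
theorem siso_first_vs_second_order (F1 G0 G1 Fh1 Fh2 Gh0 Gh1 Gh2 : ℝ) :
    (ScalarEquiv F1 G0 G1 Fh1 Fh2 Gh0 Gh1 Gh2 ↔
      (!![-Fh1, -Fh2, Gh0, Gh1, Gh2] :
          Matrix (Fin 1) (Fin 5) ℝ) *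
        !![-F1, 0, G0, G1;
           1, 0, 0, 0;
           0, 1, 0, 0;
           0, 0, 1, 0;
           0, 0, 0, 1]
        = !![F1 ^ 2, G0, G1 - F1 * G0, -F1 * G1]) ∧
    ((!![-F1, -(0:ℝ), G0, G1, 0] :
          Matrix (Fin 1) (Fin 5) ℝ) *
        !![-F1, 0, G0, G1;
           1, 0, 0, 0;
           0, 1, 0, 0;
           0, 0, 1, 0;
           0, 0, 0, 1]
        = !![F1 ^ 2, G0, G1 - F1 * G0, -F1 * G1]) := by
  constructor
  · constructor
    · intro h
      have H := fwd h
      have e1 : Fh1 * F1 - Fh2 = F1 ^ 2 := by linear_combination H 1 0 0 0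
      have e2 : Gh0 = G0 := by linear_combination H 0 0 0 1
      have e3 : Gh1 - Fh1 * G0 = G1 - F1 * G0 := by linear_combination H 0 0 1 0
      have e4 : Gh2 - Fh1 * G1 = -F1 * G1 := by linear_combination H 0 1 0 0
      ext i j
      fin_cases i <;> fin_cases j <;>
        simp [Matrix.mul_apply, Fin.sum_univ_succ] <;> linarith
    · intro hM
      have h0 := congrFun (congrFun hM 0)
      have e1 : Fh1 * F1 - Fh2 = F1 ^ 2 := by
        have := h0 0; simp [Matrix.mul_apply, Fin.sum_univ_succ] at this; linarith
      have e2 : Gh0 = G0 := by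
        have := h0 1; simp [Matrix.mul_apply, Fin.sum_univ_succ] at this; linarith
      have e3 : Gh1 - Fh1 * G0 = G1 - F1 * G0 := by
        have := h0 2; simp [Matrix.mul_apply, Fin.sum_univ_succ] at this; linarith
      have e4 : Gh2 - Fh1 * G1 = -F1 * G1 := by
        have := h0 3; simp [Matrix.mul_apply, Fin.sum_univ_succ] at this; linarith
      exact bwd e1 e2 e3 e4
  · ext i j
    fin_cases i <;> fin_cases j <;>
      simp [Matrix.mul_apply, Fin.sum_univ_succ] <;> ring
end

section
/- If the regressor sequence (φ_{n,k}ᵀ)_{k≥0} is persistently exciting, i.e., C := lim_{k→∞} (1/k) Σ_{i=0}^{k-1} φ_{n,i} φ_{n,i}ᵀ exists and is positive definite, then the RLS error under correct model order satisfies lim_{k→∞} k θ̃_k = θ̃_0 P_0^{-1} C^{-1}; in particular θ̃_k → 0 at rate asymptotically proportional to 1/k. -/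
open Finset Matrix Filter

lemma vecMulVec_mulVec_left {p d : ℕ} (A : Matrix (Fin p) (Fin d) ℝ) (x : Fin d → ℝ) :
    vecMulVec (A *ᵥ x) x = A * vecMulVec x x := by
  ext i j
  simp [vecMulVec, mulVec, dotProduct, Matrix.mul_apply, Finset.sum_mul, mul_assoc]

/-- under persistent excitation (the Cesàro average of regressor
outer products converges to a positive definite C), the RLS error with correct
model order satisfies lim k θ̃_k = θ̃_0 P_0⁻¹ C⁻¹; in particular θ̃_k → 0. -/
theorem rls_error_rate_persistent_excitation {p d : ℕ}
    (φ : ℕ → Fin d → ℝ) (y : ℕ → Fin p → ℝ)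
    (θtrue θ0 : Matrix (Fin p) (Fin d) ℝ) (P0 : Matrix (Fin d) (Fin d) ℝ)
    (hP0 : P0.PosDef)
    (hy : ∀ k, y k = θtrue *ᵥ φ k)
    (θs : ℕ → Matrix (Fin p) (Fin d) ℝ) (Ps : ℕ → Matrix (Fin d) (Fin d) ℝ)
    (hθinit : θs 0 = θ0) (hPinit : Ps 0 = P0)
    (hPrec : ∀ k, (Ps (k + 1))⁻¹ = (Ps k)⁻¹ + vecMulVec (φ k) (φ k))
    (hPpd : ∀ k, (Ps k).PosDef)
    (hθrec : ∀ k, θs (k + 1)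
      = θs k + vecMulVec (y k - θs k *ᵥ φ k) (φ k) * Ps (k + 1))
    (C : Matrix (Fin d) (Fin d) ℝ)
    (hC : Tendsto (fun k : ℕ => (k : ℝ)⁻¹ • ∑ i ∈ Finset.range k, vecMulVec (φ i) (φ i))
      atTop (nhds C))
    (hCpd : C.PosDef) :
    Tendsto (fun k : ℕ => (k : ℝ) • (θs k - θtrue)) atTop
      (nhds ((θ0 - θtrue) * P0⁻¹ * C⁻¹)) ∧
    Tendsto (fun k : ℕ => θs k - θtrue) atTop (nhds 0) := by
  -- step 1: invariant
  have hPunit : ∀ k, IsUnit (Ps k).det := fun k => (hPpd k).det_pos.ne'.isUnit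
  have hinv : ∀ k, (θs k - θtrue) * (Ps k)⁻¹ = (θ0 - θtrue) * P0⁻¹ := by
    intro k
    induction k with
    | zero => rw [hθinit, hPinit]
    | succ k ih =>
      have hstep : θs (k+1) - θtrue
          = (θs k - θtrue) - (θs k - θtrue) * vecMulVec (φ k) (φ k) * Ps (k+1) := by
        have : y k - θs k *ᵥ φ k = -((θs k - θtrue) *ᵥ φ k) := by
          rw [hy]
          simp [Matrix.sub_mulVec]
        rw [hθrec, this]
        rw [show vecMulVec (-((θs k - θtrue) *ᵥ φ k)) (φ k)
            = -((θs k - θtrue) * vecMulVec (φ k) (φ k)) by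
          rw [← vecMulVec_mulVec_left]
          ext i j; simp [vecMulVec]]
        rw [Matrix.neg_mul]
        abel
      rw [hstep, Matrix.sub_mul, Matrix.mul_assoc ((θs k - θtrue) * vecMulVec (φ k) (φ k)),
        Matrix.mul_nonsing_inv _ (hPunit (k+1)), Matrix.mul_one, hPrec, Matrix.mul_add, ih]
      abel
  -- (Ps k)⁻¹ = sum + P0⁻¹
  have hPsum : ∀ k, (Ps k)⁻¹ = (∑ i ∈ Finset.range k, vecMulVec (φ i) (φ i)) + P0⁻¹ := by
    intro k
    induction k with
    | zero => simp [hPinit]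
    | succ k ih => rw [hPrec, ih, Finset.sum_range_succ]; abel
  -- θ̃ k = (θ0 - θtrue) * P0⁻¹ * Ps k
  have hform : ∀ k, θs k - θtrue = (θ0 - θtrue) * P0⁻¹ * Ps k := by
    intro k
    rw [← hinv k, Matrix.mul_assoc, Matrix.nonsing_inv_mul _ (hPunit k), Matrix.mul_one]
  -- convergence of (1/k) • (Ps k)⁻¹ to C
  have hCinv : Tendsto (fun k : ℕ => (k : ℝ)⁻¹ • (Ps k)⁻¹) atTop (nhds C) := by
    have h2 : Tendsto (fun k : ℕ => (k : ℝ)⁻¹ • P0⁻¹) atTop (nhds (0 : Matrix (Fin d) (Fin d) ℝ)) := by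
      have := (tendsto_inv_atTop_nhds_zero_nat (𝕜 := ℝ)).smul_const (P0⁻¹ : Matrix (Fin d) (Fin d) ℝ)
      simpa using this
    have := hC.add h2
    simp only [← smul_add] at this
    simpa [hPsum, add_zero] using this
  -- inverse continuity
  have hCdet : IsUnit C.det := hCpd.det_pos.ne'.isUnit
  have hcont : ContinuousAt Inv.inv C := by
    apply continuousAt_matrix_inv
    have : C.det ≠ 0 := hCpd.det_pos.ne'
    rw [show (Ring.inverse : ℝ → ℝ) = Inv.inv from funext fun x => Ring.inverse_eq_inv x]
    exact continuousAt_inv₀ this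
  have hinvTend : Tendsto (fun k : ℕ => ((k : ℝ)⁻¹ • (Ps k)⁻¹)⁻¹) atTop (nhds C⁻¹) :=
    hcont.tendsto.comp hCinv
  -- for k ≥ 1, ((k:ℝ)⁻¹ • (Ps k)⁻¹)⁻¹ = (k:ℝ) • Ps k
  have hkey : ∀ᶠ k : ℕ in atTop, ((k : ℝ)⁻¹ • (Ps k)⁻¹)⁻¹ = (k : ℝ) • Ps k := by
    filter_upwards [eventually_ge_atTop 1] with k hk
    have hk0 : (k : ℝ) ≠ 0 := by positivity
    have : Invertible ((k : ℝ)⁻¹) := invertibleOfNonzero (inv_ne_zero hk0)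
    rw [Matrix.inv_smul (A := (Ps k)⁻¹) ((k:ℝ)⁻¹) (((hPpd k).inv).det_pos.ne'.isUnit), Matrix.nonsing_inv_nonsing_inv _ (hPunit k)]
    congr 1
    rw [invOf_eq_inv, inv_inv]
  have hmain : Tendsto (fun k : ℕ => (k : ℝ) • Ps k) atTop (nhds C⁻¹) :=
    hinvTend.congr' hkey
  have h1 : Tendsto (fun k : ℕ => (k : ℝ) • (θs k - θtrue)) atTop
      (nhds ((θ0 - θtrue) * P0⁻¹ * C⁻¹)) := by
    have hcm : Continuous fun X : Matrix (Fin d) (Fin d) ℝ => (θ0 - θtrue) * P0⁻¹ * X :=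
      continuous_const.matrix_mul continuous_id
    have := (hcm.tendsto C⁻¹).comp hmain
    have h2 := this.congr fun k => rfl
    refine h2.congr fun k => ?_
    show (θ0 - θtrue) * P0⁻¹ * ((k:ℝ) • Ps k) = (k:ℝ) • (θs k - θtrue)
    rw [hform k, Matrix.mul_smul]
  refine ⟨h1, ?_⟩
  have h2 : Tendsto (fun k : ℕ => (k : ℝ)⁻¹ • ((k : ℝ) • (θs k - θtrue))) atTop
      (nhds (0 : Matrix (Fin p) (Fin d) ℝ)) := by
    have := (tendsto_inv_atTop_nhds_zero_nat (𝕜 := ℝ)).smul h1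
    simpa using this
  refine h2.congr' ?_
  filter_upwards [eventually_ge_atTop 1] with k hk
  have hk0 : (k : ℝ) ≠ 0 := by positivity
  rw [smul_smul, inv_mul_cancel₀ hk0, one_smul]
end
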